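/- The minimum of H₁ over the linearized constraint set equals −½·(v^⊤ζ̃)·ψ, i.e. min{ H₁(ζ) : ζ ∈ Z⁰_lin } = −(ψ/2)·v^⊤ζ̃, and this minimum is attained at ζ = ζ⁰(Σ) + ψ·ζ̃. In particular ζ⁰(Σ) + ψ·ζ̃ ∈ Z⁰_lin, i.e. c^⊤ζ̃ = 0 and ζ̃₄ ≥ 0. -/

import Mathlib

open Finset

noncomputable section

namespace Stmt8

/-- The Euclidean norm of a vector in `ℝ^m`. -/
def enorm {m : ℕ} (z : Fin m → ℝ) : ℝ := Real.sqrt (∑ i, z i ^ 2)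

/-- The reference control `ζ⁰(Σ) = (0, Σ, 0, 0)`. -/
def zeta0 (Sig : ℝ) : Fin 4 → ℝ := ![0, Sig, 0, 0]

/-- The fourth standard basis vector `e₄` of `ℝ⁴`. -/
def e4 : Fin 4 → ℝ := fun i => if i = 3 then 1 else 0

/-- `c^⊤ Ψ v` for the diagonal matrix `Ψ = diag psi`. -/
def cPv (psi c v : Fin 4 → ℝ) : ℝ := ∑ i, c i * psi i * v i

/-- `c^⊤ Ψ c` for the diagonal matrix `Ψ = diag psi`. -/
def cPc (psi c : Fin 4 → ℝ) : ℝ := ∑ i, c i * psi i * c i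

/-- The Lagrange multiplier `λ`. -/
def lam (psi c v : Fin 4 → ℝ) : ℝ :=
  if 0 ≤ v 3 - cPv psi c v / cPc psi c * c 3 then cPv psi c v / cPc psi c
  else (cPv psi c v - c 3 * v 3 * psi 3) / (cPc psi c - c 3 ^ 2 * psi 3)

/-- The Lagrange multiplier `μ = max (-(v₄ - λ c₄)) 0`. -/
def mu (psi c v : Fin 4 → ℝ) : ℝ := max (-(v 3 - lam psi c v * c 3)) 0

/-- `ζ̃ = Ψ (v - λ c + μ e₄)`. -/
def zetaTilde (psi c v : Fin 4 → ℝ) : Fin 4 → ℝ := fun i =>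
  psi i * (v i - lam psi c v * c i + mu psi c v * e4 i)

/-- `H₁(ζ) = (1/(2ψ)) (ζ - ζ⁰(Σ))^⊤ Ψ⁻¹ (ζ - ζ⁰(Σ)) - v^⊤ (ζ - ζ⁰(Σ))`. -/
def H1 (Sig ψ : ℝ) (psi v : Fin 4 → ℝ) (z : Fin 4 → ℝ) : ℝ :=
  (1 / (2 * ψ)) * ∑ i, (z i - zeta0 Sig i) ^ 2 / psi i -
    ∑ i, v i * (z i - zeta0 Sig i)

/-! With `w = v - λ c + μ e₄` we have `ζ̃ = Ψ w`; the choice of `λ` makes `c^⊤ ζ̃ = 0`, and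
`μ = max (-(v₄ - λ c₄)) 0` gives `w₄ = max (v₄ - λ c₄) 0`, so `μ ≥ 0`, `ζ̃₄ ≥ 0` and `μ w₄ = 0`
(complementary slackness). For feasible `ζ` and `d = ζ - ζ⁰`, `v^⊤ d = w^⊤ d - μ d₄ ≤ w^⊤ d`, and
completing the square, `d_i² / (2ψ ψ_i) - w_i d_i ≥ -(ψ/2) ψ_i w_i²`, with equality at `d = ψ ζ̃`.
Summing and using `v^⊤ ζ̃ = w^⊤ Ψ w` gives the bound and its attainment. -/

lemma neg_half_mul_sum_le {ι : Type*} [Fintype ι] {ψ : ℝ} (hψ : 0 < ψ) {p : ι → ℝ}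
    (hp : ∀ i, 0 < p i) (w d : ι → ℝ) :
    -(ψ / 2) * ∑ i, p i * w i ^ 2 ≤ 1 / (2 * ψ) * ∑ i, d i ^ 2 / p i - ∑ i, w i * d i := by
  have hterm : ∀ i, -(ψ / 2) * (p i * w i ^ 2) ≤ 1 / (2 * ψ) * (d i ^ 2 / p i) - w i * d i := by
    intro i
    have hpi := hp i
    have hsq : 1 / (2 * ψ) * (d i ^ 2 / p i) - w i * d i - -(ψ / 2) * (p i * w i ^ 2)
        = (d i - ψ * p i * w i) ^ 2 / (2 * ψ * p i) := by
      field_simp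
      ring
    have : 0 ≤ (d i - ψ * p i * w i) ^ 2 / (2 * ψ * p i) := by positivity
    linarith
  rw [Finset.mul_sum, Finset.mul_sum, ← Finset.sum_sub_distrib]
  exact Finset.sum_le_sum fun i _ => hterm i

lemma zeta0_three (Sig : ℝ) : zeta0 Sig 3 = 0 := rfl

lemma sum_e4_mul (x : Fin 4 → ℝ) : ∑ i, e4 i * x i = x 3 := by
  simp [e4]

section Multipliers

variable (psi c v : Fin 4 → ℝ)

lemma cPc_sub_pos (hpsi : ∀ i, 0 < psi i) (hc : c 0 ≠ 0) : 0 < cPc psi c - c 3 ^ 2 * psi 3 := by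
  have hc0 : 0 < c 0 * c 0 := mul_self_pos.mpr hc
  simp only [cPc, Fin.sum_univ_four]
  nlinarith [mul_pos hc0 (hpsi 0), mul_nonneg (mul_self_nonneg (c 1)) (hpsi 1).le,
    mul_nonneg (mul_self_nonneg (c 2)) (hpsi 2).le]

lemma cPc_pos (hpsi : ∀ i, 0 < psi i) (hc : c 0 ≠ 0) : 0 < cPc psi c := by
  nlinarith [cPc_sub_pos psi c hpsi hc, sq_nonneg (c 3), hpsi 3]

def residual : Fin 4 → ℝ := fun i => v i - lam psi c v * c i + mu psi c v * e4 i

lemma zetaTilde_eq_mul_residual (i : Fin 4) :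
    zetaTilde psi c v i = psi i * residual psi c v i := rfl

lemma residual_three : residual psi c v 3 = max (v 3 - lam psi c v * c 3) 0 := by
  simp only [residual, mu, e4, if_true, mul_one]
  rcases le_total 0 (v 3 - lam psi c v * c 3) with h | h
  · rw [max_eq_right (by linarith), max_eq_left h]; ring
  · rw [max_eq_left (by linarith), max_eq_right h]; ring

lemma mu_nonneg : 0 ≤ mu psi c v := le_max_right _ _

lemma mu_mul_residual_three : mu psi c v * residual psi c v 3 = 0 := by
  rw [residual_three, mu]
  rcases le_total 0 (v 3 - lam psi c v * c 3) with h | h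
  · rw [max_eq_right (by linarith), zero_mul]
  · rw [max_eq_right h, mul_zero]

lemma zetaTilde_three_nonneg (hpsi : ∀ i, 0 < psi i) : 0 ≤ zetaTilde psi c v 3 := by
  rw [zetaTilde_eq_mul_residual, residual_three]
  exact mul_nonneg (hpsi 3).le (le_max_right _ _)

lemma sum_v_mul_eq (x : Fin 4 → ℝ) :
    ∑ i, v i * x i = ∑ i, residual psi c v i * x i + lam psi c v * ∑ i, c i * x i
      - mu psi c v * x 3 := by
  have hv : ∀ i, v i * x i = residual psi c v i * x i + lam psi c v * (c i * x i)
      - mu psi c v * (e4 i * x i) := fun i => by simp only [residual]; ring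
  simp only [hv, Finset.sum_sub_distrib, Finset.sum_add_distrib, ← Finset.mul_sum, sum_e4_mul]

lemma sum_c_mul_zetaTilde_eq :
    ∑ i, c i * zetaTilde psi c v i
      = cPv psi c v - lam psi c v * cPc psi c + mu psi c v * (c 3 * psi 3) := by
  simp only [zetaTilde, cPv, cPc, mul_add, mul_sub, Finset.sum_add_distrib,
    Finset.sum_sub_distrib, Finset.mul_sum]
  rw [show ∑ i, c i * (psi i * (mu psi c v * e4 i)) = ∑ i, e4 i * (mu psi c v * (c i * psi i))
    from Finset.sum_congr rfl fun i _ => by ring, sum_e4_mul]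
  simp only [mul_assoc, mul_left_comm]

lemma sum_c_mul_zetaTilde (hpsi : ∀ i, 0 < psi i) (hc : c 0 ≠ 0) :
    ∑ i, c i * zetaTilde psi c v i = 0 := by
  have hP := cPc_pos psi c hpsi hc
  have hD := cPc_sub_pos psi c hpsi hc
  rw [sum_c_mul_zetaTilde_eq]
  by_cases h : 0 ≤ v 3 - cPv psi c v / cPc psi c * c 3
  · have hlam : lam psi c v = cPv psi c v / cPc psi c := if_pos h
    have hmu : mu psi c v = 0 := by
      rw [mu, hlam]
      exact max_eq_right (by linarith)
    rw [hmu, hlam]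
    field_simp
    ring
  · -- the unconstrained minimiser violates `ζ₄ ≥ 0`, so that constraint is active
    have hlam : lam psi c v
        = (cPv psi c v - c 3 * v 3 * psi 3) / (cPc psi c - c 3 ^ 2 * psi 3) := if_neg h
    have hslack : v 3 - lam psi c v * c 3
        = (v 3 * cPc psi c - cPv psi c v * c 3) / (cPc psi c - c 3 ^ 2 * psi 3) := by
      rw [hlam]
      field_simp
      ring
    have hviol : v 3 * cPc psi c - cPv psi c v * c 3 < 0 := by
      have hscaled : (v 3 - cPv psi c v / cPc psi c * c 3) * cPc psi c
          = v 3 * cPc psi c - cPv psi c v * c 3 := by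
        field_simp
      rw [← hscaled]
      exact mul_neg_of_neg_of_pos (not_le.mp h) hP
    have hmu : mu psi c v = lam psi c v * c 3 - v 3 := by
      rw [mu, max_eq_left]
      · ring
      · rw [hslack]
        exact neg_nonneg.mpr (div_neg_of_neg_of_pos hviol hD).le
    rw [hmu, hlam]
    field_simp
    ring

lemma sum_v_mul_zetaTilde (hpsi : ∀ i, 0 < psi i) (hc : c 0 ≠ 0) :
    ∑ i, v i * zetaTilde psi c v i = ∑ i, psi i * residual psi c v i ^ 2 := by
  rw [sum_v_mul_eq psi c v, sum_c_mul_zetaTilde psi c v hpsi hc, zetaTilde_eq_mul_residual,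
    mul_left_comm, mu_mul_residual_three]
  simp only [zetaTilde_eq_mul_residual, sub_zero, mul_zero, add_zero]
  exact Finset.sum_congr rfl fun i _ => by ring

end Multipliers

section Minimization

variable (Sig ψ : ℝ) (psi c v : Fin 4 → ℝ)

lemma H1_zeta0_add_smul_zetaTilde (hψ : ψ ≠ 0) (hpsi : ∀ i, 0 < psi i) (hc : c 0 ≠ 0) :
    H1 Sig ψ psi v (fun i => zeta0 Sig i + ψ * zetaTilde psi c v i)
      = -(ψ / 2) * ∑ i, v i * zetaTilde psi c v i := by
  have hsq : ∀ i, (ψ * zetaTilde psi c v i) ^ 2 / psi i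
      = ψ ^ 2 * (psi i * residual psi c v i ^ 2) := fun i => by
    rw [zetaTilde_eq_mul_residual]
    field_simp [(hpsi i).ne']
  simp only [H1, add_sub_cancel_left, hsq, mul_left_comm (v _) ψ, ← Finset.mul_sum,
    sum_v_mul_zetaTilde psi c v hpsi hc]
  field_simp
  ring

lemma neg_half_mul_sum_le_H1 (hψ : 0 < ψ) (hpsi : ∀ i, 0 < psi i) (hc : c 0 ≠ 0)
    (z : Fin 4 → ℝ) (hz : ∑ i, c i * (z i - zeta0 Sig i) = 0) (hz3 : 0 ≤ z 3) :
    -(ψ / 2) * ∑ i, v i * zetaTilde psi c v i ≤ H1 Sig ψ psi v z := by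
  have hlin : ∑ i, v i * (z i - zeta0 Sig i)
      ≤ ∑ i, residual psi c v i * (z i - zeta0 Sig i) := by
    rw [sum_v_mul_eq psi c v, hz, zeta0_three, sub_zero, mul_zero, add_zero]
    linarith [mul_nonneg (mu_nonneg psi c v) hz3]
  rw [sum_v_mul_zetaTilde psi c v hpsi hc]
  calc -(ψ / 2) * ∑ i, psi i * residual psi c v i ^ 2
      ≤ 1 / (2 * ψ) * ∑ i, (z i - zeta0 Sig i) ^ 2 / psi i
        - ∑ i, residual psi c v i * (z i - zeta0 Sig i) :=
        neg_half_mul_sum_le hψ hpsi _ _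
    _ ≤ H1 Sig ψ psi v z := by unfold H1; linarith

end Minimization

theorem H1_min_on_linearized_constraint_general
    (Sig : ℝ) (psi c v : Fin 4 → ℝ)
    (hpsi : ∀ i, 0 < psi i) (hc : c 0 ≠ 0)
    (ψ : ℝ) (hψ : 0 < ψ) :
    (∑ i, c i * zetaTilde psi c v i = 0) ∧
    0 ≤ zetaTilde psi c v 3 ∧
    (∑ i, c i * ((zeta0 Sig i + ψ * zetaTilde psi c v i) - zeta0 Sig i) = 0) ∧
    0 ≤ zeta0 Sig 3 + ψ * zetaTilde psi c v 3 ∧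
    H1 Sig ψ psi v (fun i => zeta0 Sig i + ψ * zetaTilde psi c v i) =
      -(ψ / 2) * ∑ i, v i * zetaTilde psi c v i ∧
    (∀ z : Fin 4 → ℝ, (∑ i, c i * (z i - zeta0 Sig i) = 0) → 0 ≤ z 3 →
      -(ψ / 2) * ∑ i, v i * zetaTilde psi c v i ≤ H1 Sig ψ psi v z) := by
  have hfeas := sum_c_mul_zetaTilde psi c v hpsi hc
  have hnonneg := zetaTilde_three_nonneg psi c v hpsi
  refine ⟨hfeas, hnonneg, ?_, ?_, H1_zeta0_add_smul_zetaTilde Sig ψ psi c v hψ.ne' hpsi hc,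
    neg_half_mul_sum_le_H1 Sig ψ psi c v hψ hpsi hc⟩
  · simp only [add_sub_cancel_left, mul_left_comm (c _) ψ, ← Finset.mul_sum, hfeas, mul_zero]
  · rw [zeta0_three, zero_add]
    exact mul_nonneg hψ.le hnonneg

/-- The minimum of `H₁` over the linearized constraint set `Z⁰_lin` equals
`-(ψ/2) v^⊤ ζ̃` and is attained at `ζ⁰(Σ) + ψ ζ̃`; in particular `ζ⁰(Σ) + ψ ζ̃ ∈ Z⁰_lin`,
i.e. `c^⊤ ζ̃ = 0` and `ζ̃₄ ≥ 0`. -/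
theorem H1_min_on_linearized_constraint
    (Sig : ℝ) (hSig : 0 < Sig) (psi c v : Fin 4 → ℝ)
    (hpsi : ∀ i, 0 < psi i) (hc : c 0 ≠ 0)
    (ψ : ℝ) (hψ : 0 < ψ) :
    (∑ i, c i * zetaTilde psi c v i = 0) ∧
    0 ≤ zetaTilde psi c v 3 ∧
    (∑ i, c i * ((zeta0 Sig i + ψ * zetaTilde psi c v i) - zeta0 Sig i) = 0) ∧
    0 ≤ zeta0 Sig 3 + ψ * zetaTilde psi c v 3 ∧
    H1 Sig ψ psi v (fun i => zeta0 Sig i + ψ * zetaTilde psi c v i) =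
      -(ψ / 2) * ∑ i, v i * zetaTilde psi c v i ∧
    (∀ z : Fin 4 → ℝ, (∑ i, c i * (z i - zeta0 Sig i) = 0) → 0 ≤ z 3 →
      -(ψ / 2) * ∑ i, v i * zetaTilde psi c v i ≤ H1 Sig ψ psi v z) :=
  H1_min_on_linearized_constraint_general Sig psi c v hpsi hc ψ hψ

end Stmt8
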